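/- Let P and U be infinite lower triangular complex matrices with unit diagonal, with associated polynomial sequences p_k(t) = ∑_j P_{k,j} t^j and u_k(t) = ∑_j U_{k,j} t^j, and set H = P X P⁻¹ and K = U X U⁻¹. Then p_n(t) p_m(t) = ∑_{k=0}^{n+m} e(n,m,k) u_k(t), where e(n,m,k) = ∑_{j=0}^{n+m} (p_n(H))_{m,j} (p_j(K))_{0,k}. -/

import Mathlib

open scoped BigOperators

/-- Product of infinite matrices; the sum is a `tsum`, which reduces to a finite
sum for the banded matrices considered here. -/
noncomputable def matMul (A B : ℕ → ℕ → ℂ) : ℕ → ℕ → ℂ :=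
  fun i k => ∑' j, A i j * B j k

noncomputable def matPow (A : ℕ → ℕ → ℂ) : ℕ → ℕ → ℕ → ℂ
  | 0 => fun i k => if i = k then 1 else 0
  | n + 1 => matMul (matPow A n) A

/-- Substitution of a matrix into a polynomial. -/
noncomputable def matPolyEval (w : Polynomial ℂ) (A : ℕ → ℕ → ℂ) : ℕ → ℕ → ℂ :=
  fun i k => ∑ m ∈ Finset.range (w.natDegree + 1), w.coeff m * matPow A m i k

/-- The shift matrix `X`, with `X_{j,j+1} = 1`. -/
def Xmat : ℕ → ℕ → ℂ := fun i k => if k = i + 1 then 1 else 0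

/-- The transpose `X̂` of the shift matrix. -/
def XhatMat : ℕ → ℕ → ℂ := fun i k => if i = k + 1 then 1 else 0

/-- The identity matrix. -/
def Imat : ℕ → ℕ → ℂ := fun i k => if i = k then 1 else 0

/-- The polynomial given by row `k` of a lower triangular matrix. -/
noncomputable def rowPoly (M : ℕ → ℕ → ℂ) (k : ℕ) : Polynomial ℂ :=
  ∑ j ∈ Finset.range (k + 1), Polynomial.C (M k j) * Polynomial.X ^ j

/-!
Since `H P = P X` and `P` is lower triangular, row `a` of `H` expresses `t * p_a` in the
basis `(p_j)`; iterating, row `m` of `w(H)` expresses `w * p_m`. Taking `w = p_n` gives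
`p_n p_m = ∑_j p_n(H)_{m,j} p_j`, and the same fact for `K` and `U`, applied to
`p_j = p_j * u_0`, gives `p_j = ∑_k p_j(K)_{0,k} u_k`.
-/

open Polynomial Finset

/-- Lower triangular for `c = 0`, lower Hessenberg for `c = 1`. -/
def Band (A : ℕ → ℕ → ℂ) (c : ℕ) : Prop := ∀ i j, i + c < j → A i j = 0

section Band

variable {A B : ℕ → ℕ → ℂ} {c d : ℕ}

lemma Band.matMul_eq_sum (hA : Band A c) (B : ℕ → ℕ → ℂ) {i N : ℕ} (hN : i + c < N)
    (k : ℕ) : matMul A B i k = ∑ j ∈ range N, A i j * B j k :=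
  tsum_eq_sum fun j hj => by
    rw [hA i j (by simp only [mem_range, not_lt] at hj; omega), zero_mul]

lemma Band.mul (hA : Band A c) (hB : Band B d) : Band (matMul A B) (c + d) := by
  intro i k hk
  rw [hA.matMul_eq_sum B (Nat.lt_succ_self (i + c))]
  refine sum_eq_zero fun j hj => ?_
  rw [hB j k (by simp only [mem_range] at hj; omega), mul_zero]

lemma Band.matMul_assoc (hA : Band A c) (hB : Band B d) (C : ℕ → ℕ → ℂ) :
    matMul (matMul A B) C = matMul A (matMul B C) := by
  funext i l
  have hN : i + c < i + c + 1 := Nat.lt_succ_self _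
  rw [(hA.mul hB).matMul_eq_sum C (N := i + c + d + 1) (by omega), hA.matMul_eq_sum _ hN]
  simp_rw [hA.matMul_eq_sum B hN, sum_mul]
  rw [sum_comm]
  refine sum_congr rfl fun a ha => ?_
  rw [hB.matMul_eq_sum C (N := i + c + d + 1) (by simp only [mem_range] at ha; omega), mul_sum]
  exact sum_congr rfl fun j _ => mul_assoc _ _ _

lemma Band.sum_matMul_mul (hB : Band B c) (A : ℕ → ℕ → ℂ) (v : ℕ → ℂ[X]) {i N : ℕ}
    (hN : i + c < N) :
    ∑ j ∈ range N, C (matMul B A i j) * v j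
      = ∑ a ∈ range N, C (B i a) * ∑ j ∈ range N, C (A a j) * v j := by
  simp_rw [hB.matMul_eq_sum A hN, map_sum, sum_mul, mul_sum, map_mul, mul_assoc]
  exact sum_comm

lemma Band.pow (hA : Band A 1) (r : ℕ) : Band (matPow A r) r := by
  induction r with
  | zero =>
    intro i j h
    simp only [matPow, ite_eq_right_iff]
    omega
  | succ r ih => exact ih.mul hA

end Band

lemma band_Xmat : Band Xmat 1 := by
  intro i j h
  simp only [Xmat, ite_eq_right_iff]
  omega

lemma matMul_Imat (A : ℕ → ℕ → ℂ) : matMul A Imat = A := by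
  funext i k
  unfold matMul Imat
  rw [tsum_eq_single k fun j hj => by simp [hj]]
  simp

lemma matMul_Xmat (A : ℕ → ℕ → ℂ) (i k : ℕ) :
    matMul A Xmat i (k + 1) = A i k := by
  unfold matMul Xmat
  rw [tsum_eq_single k fun j hj => by simp [Ne.symm hj]]
  simp

lemma matMul_Xmat_zero (A : ℕ → ℕ → ℂ) (i : ℕ) : matMul A Xmat i 0 = 0 := by
  simp [matMul, Xmat]

lemma matMul_matMul_cancel {B Q R : ℕ → ℕ → ℂ} {c d : ℕ} (hB : Band B c) (hQ : Band Q d)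
    (hQR : matMul Q R = Imat) : matMul (matMul B Q) R = B := by
  rw [hB.matMul_assoc hQ, hQR, matMul_Imat]

lemma natDegree_rowPoly_le (M : ℕ → ℕ → ℂ) (k : ℕ) : (rowPoly M k).natDegree ≤ k := by
  refine natDegree_sum_le_of_forall_le _ _ fun j hj => ?_
  exact (natDegree_C_mul_X_pow_le _ _).trans (Nat.lt_succ_iff.mp (mem_range.mp hj))

lemma coeff_rowPoly {M : ℕ → ℕ → ℂ} (hM : Band M 0) (k b : ℕ) :
    (rowPoly M k).coeff b = M k b := by
  simp only [rowPoly, finsetSum_coeff, coeff_C_mul, coeff_X_pow, mul_ite, mul_one, mul_zero,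
    sum_ite_eq, mem_range]
  split_ifs with hb
  · rfl
  · exact (hM k b (by omega)).symm

lemma rowPoly_zero {M : ℕ → ℕ → ℂ} (hM : M 0 0 = 1) : rowPoly M 0 = 1 := by
  simp [rowPoly, hM]

def IsMulXMatrix (A : ℕ → ℕ → ℂ) (v : ℕ → ℂ[X]) : Prop :=
  ∀ a N, a + 1 < N → ∑ j ∈ range N, C (A a j) * v j = X * v a

section IsMulXMatrix

variable {A : ℕ → ℕ → ℂ} {v : ℕ → ℂ[X]}

lemma isMulXMatrix_rowPoly (hA : Band A 1) {P : ℕ → ℕ → ℂ} (hP : Band P 0)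
    (hAP : matMul A P = matMul P Xmat) : IsMulXMatrix A (rowPoly P) := by
  intro a N hN
  ext b
  simp_rw [finsetSum_coeff, coeff_C_mul, coeff_rowPoly hP, ← hA.matMul_eq_sum P hN, hAP]
  rcases b with _ | b
  · rw [matMul_Xmat_zero, coeff_X_mul_zero]
  · rw [matMul_Xmat, coeff_X_mul, coeff_rowPoly hP]

lemma sum_matPow_mul (hA : Band A 1)
    (hAv : IsMulXMatrix A v) (r : ℕ) {i N : ℕ}
    (hN : i + r < N) : ∑ j ∈ range N, C (matPow A r i j) * v j = X ^ r * v i := by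
  induction r with
  | zero =>
    rw [sum_eq_single_of_mem i (mem_range.mpr (by omega)) fun j _ hj => by
      simp [matPow, Ne.symm hj]]
    simp [matPow]
  | succ r ih =>
    have hAv' : ∀ a ∈ range N, C (matPow A r i a) * ∑ j ∈ range N, C (A a j) * v j
        = X * (C (matPow A r i a) * v a) := fun a _ => by
      by_cases ha : a ≤ i + r
      · rw [hAv a N (by omega), mul_left_comm]
      · simp [hA.pow r i a (by omega)]
    rw [show matPow A (r + 1) = matMul (matPow A r) A from rfl,
      (hA.pow r).sum_matMul_mul A v (by omega), sum_congr rfl hAv', ← mul_sum,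
      ih (by omega), pow_succ', mul_assoc]

lemma sum_matPolyEval_mul (hA : Band A 1)
    (hAv : IsMulXMatrix A v) (w : ℂ[X])
    {i N : ℕ} (hN : i + w.natDegree < N) :
    ∑ j ∈ range N, C (matPolyEval w A i j) * v j = w * v i := by
  have hpow : ∀ r ∈ range (w.natDegree + 1),
      ∑ j ∈ range N, C (w.coeff r) * (C (matPow A r i j) * v j)
        = C (w.coeff r) * X ^ r * v i := fun r hr => by
    rw [← mul_sum, sum_matPow_mul hA hAv r (by simp only [mem_range] at hr; omega), mul_assoc]
  simp_rw [matPolyEval, map_sum, sum_mul, map_mul, mul_assoc]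
  rw [sum_comm, sum_congr rfl hpow, ← sum_mul, ← as_sum_range_C_mul_X_pow]

end IsMulXMatrix

theorem stmt17_general (P U Pinv Uinv : ℕ → ℕ → ℂ)
    (hPlt : ∀ k j : ℕ, j > k → P k j = 0)
    (hUlt : ∀ k j : ℕ, j > k → U k j = 0) (hUdiag : ∀ k, U k k = 1)
    (hPinvLt : ∀ k j : ℕ, j > k → Pinv k j = 0)
    (hUinvLt : ∀ k j : ℕ, j > k → Uinv k j = 0)
    (hP2 : matMul Pinv P = Imat)
    (hU2 : matMul Uinv U = Imat) (n m : ℕ) :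
    let H := matMul (matMul P Xmat) Pinv
    let K := matMul (matMul U Xmat) Uinv
    let e : ℕ → ℂ := fun k =>
      ∑ j ∈ Finset.range (n + m + 1),
        matPolyEval (rowPoly P n) H m j * matPolyEval (rowPoly P j) K 0 k
    rowPoly P n * rowPoly P m =
      ∑ k ∈ Finset.range (n + m + 1), Polynomial.C (e k) * rowPoly U k := by
  intro H K e
  have bP : Band P 0 := fun i j h => hPlt i j (by omega)
  have bU : Band U 0 := fun i j h => hUlt i j (by omega)
  have bPinv : Band Pinv 0 := fun i j h => hPinvLt i j (by omega)
  have bUinv : Band Uinv 0 := fun i j h => hUinvLt i j (by omega)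
  have bPX : Band (matMul P Xmat) 1 := bP.mul band_Xmat
  have bUX : Band (matMul U Xmat) 1 := bU.mul band_Xmat
  have bH : Band H 1 := bPX.mul bPinv
  have bK : Band K 1 := bUX.mul bUinv
  have hHP : matMul H P = matMul P Xmat := matMul_matMul_cancel bPX bPinv hP2
  have hKU : matMul K U = matMul U Xmat := matMul_matMul_cancel bUX bUinv hU2
  have expandP : rowPoly P n * rowPoly P m = ∑ j ∈ range (n + m + 1),
      C (matPolyEval (rowPoly P n) H m j) * rowPoly P j :=
    (sum_matPolyEval_mul bH (isMulXMatrix_rowPoly bH bP hHP) _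
      (by have := natDegree_rowPoly_le P n; omega)).symm
  have expandU : ∀ j ∈ range (n + m + 1), rowPoly P j = ∑ k ∈ range (n + m + 1),
      C (matPolyEval (rowPoly P j) K 0 k) * rowPoly U k := fun j hj => by
    rw [sum_matPolyEval_mul bK (isMulXMatrix_rowPoly bK bU hKU) _
      (by have := natDegree_rowPoly_le P j; simp only [mem_range] at hj; omega),
      rowPoly_zero (hUdiag 0), mul_one]
  rw [expandP, sum_congr rfl fun j hj => congrArg _ (expandU j hj)]
  simp_rw [e, map_sum, sum_mul, mul_sum, map_mul, mul_assoc]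
  exact sum_comm

theorem stmt17 (P U Pinv Uinv : ℕ → ℕ → ℂ)
    (hPlt : ∀ k j : ℕ, j > k → P k j = 0) (hPdiag : ∀ k, P k k = 1)
    (hUlt : ∀ k j : ℕ, j > k → U k j = 0) (hUdiag : ∀ k, U k k = 1)
    (hPinvLt : ∀ k j : ℕ, j > k → Pinv k j = 0)
    (hUinvLt : ∀ k j : ℕ, j > k → Uinv k j = 0)
    (hP1 : matMul P Pinv = Imat) (hP2 : matMul Pinv P = Imat)
    (hU1 : matMul U Uinv = Imat) (hU2 : matMul Uinv U = Imat) (n m : ℕ) :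
    let H := matMul (matMul P Xmat) Pinv
    let K := matMul (matMul U Xmat) Uinv
    let e : ℕ → ℂ := fun k =>
      ∑ j ∈ Finset.range (n + m + 1),
        matPolyEval (rowPoly P n) H m j * matPolyEval (rowPoly P j) K 0 k
    rowPoly P n * rowPoly P m =
      ∑ k ∈ Finset.range (n + m + 1), Polynomial.C (e k) * rowPoly U k :=
  stmt17_general P U Pinv Uinv hPlt hUlt hUdiag hPinvLt hUinvLt hP2 hU2 n m
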